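/- Let p ∈ (1/2, 1), ε = log(p/(1-p)), and ρ(τ) as the exact RDP profile of Symmetric RR. If α, β ∈ (0,1) satisfy α^τ (1-β)^{1-τ} + (1-α)^τ β^{1-τ} ≤ p^τ (1-p)^{1-τ} + (1-p)^τ p^{1-τ} and the symmetric constraint for all τ > 1, then 1-α ≤ e^ε β and 1-β ≤ e^ε α. That is, the intersection of the order-τ RDP regions over all τ > 1 is contained in the pure ε-DP region. -/
import Mathlib


open Real

lemma key_pow_bound (q C : ℝ) (hq : 0 < q) (hC : 0 < C)
    (h : ∀ τ : ℝ, 1 < τ → q ^ τ ≤ C) : q ≤ 1 := by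
  by_contra hq1
  push_neg at hq1
  set τ : ℝ := max 2 ((Real.log C + 1) / Real.log q) with hτ
  have hlq : 0 < Real.log q := Real.log_pos hq1
  have hτ1 : (1:ℝ) < τ := lt_of_lt_of_le one_lt_two (le_max_left _ _)
  have h2 : (Real.log C + 1) / Real.log q ≤ τ := le_max_right _ _
  have h3 : Real.log C + 1 ≤ τ * Real.log q := by
    rw [div_le_iff₀ hlq] at h2; linarith
  have h4 := h τ hτ1
  have h5 : C < q ^ τ := by
    rw [← Real.exp_log hC, ← Real.exp_log (Real.rpow_pos_of_pos hq τ),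
      Real.log_rpow hq]
    exact Real.exp_lt_exp.mpr (by linarith)
  linarith

lemma step_bound (p a b : ℝ) (hp1 : 1/2 < p) (hp2 : p < 1) (ha : 0 < a) (hb : 0 < b)
    (h : ∀ τ : ℝ, 1 < τ →
      a ^ τ * b ^ (1 - τ) ≤ p ^ τ * (1 - p) ^ (1 - τ) + (1 - p) ^ τ * p ^ (1 - τ)) :
    a ≤ p / (1 - p) * b := by
  have hp0 : 0 < p := by linarith
  have hq0 : 0 < 1 - p := by linarith
  have hle : 1 - p ≤ p := by linarith
  have hr : 0 < p / (1 - p) := div_pos hp0 hq0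
  have hmain : (a / b) / (p / (1 - p)) ≤ 1 := by
    apply key_pow_bound _ (2 * (1 - p) / b) (div_pos (div_pos ha hb) hr)
      (div_pos (by linarith) hb)
    intro τ hτ
    have hbound : (1 - p) ^ τ * p ^ (1 - τ) ≤ p ^ τ * (1 - p) ^ (1 - τ) := by
      have h1 : (1 - p) ^ τ ≤ p ^ τ := Real.rpow_le_rpow hq0.le hle (by linarith)
      have h2 : p ^ (1 - τ) ≤ (1 - p) ^ (1 - τ) :=
        Real.rpow_le_rpow_of_nonpos hq0 hle (by linarith)
      exact mul_le_mul h1 h2 (Real.rpow_pos_of_pos hp0 _).le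
        (Real.rpow_nonneg hp0.le _)
    have h6 : a ^ τ * b ^ (1 - τ) ≤ 2 * (p ^ τ * (1 - p) ^ (1 - τ)) := by
      have := h τ hτ; linarith
    have hbτ : (0:ℝ) < b ^ τ := Real.rpow_pos_of_pos hb τ
    have hqτ : (0:ℝ) < (1 - p) ^ τ := Real.rpow_pos_of_pos hq0 τ
    have hb1 : b ^ (1 - τ) = b / b ^ τ := by
      rw [Real.rpow_sub hb, Real.rpow_one]
    have hq1 : (1 - p) ^ (1 - τ) = (1 - p) / (1 - p) ^ τ := by
      rw [Real.rpow_sub hq0, Real.rpow_one]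
    rw [hb1, hq1] at h6
    have e1 : (a / b) / (p / (1 - p)) = (a * (1 - p)) / (b * p) := by
      field_simp
    have hqeq : ((a / b) / (p / (1 - p))) ^ τ
        = (a ^ τ * (1 - p) ^ τ) / (b ^ τ * p ^ τ) := by
      rw [e1, Real.div_rpow (by positivity) (by positivity),
        Real.mul_rpow ha.le hq0.le, Real.mul_rpow hb.le hp0.le]
    have h6' : a ^ τ * b * (1 - p) ^ τ ≤ 2 * p ^ τ * (1 - p) * b ^ τ := by
      have h7 : a ^ τ * (b / b ^ τ) = (a ^ τ * b) / b ^ τ := by ring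
      have h8 : 2 * (p ^ τ * ((1 - p) / (1 - p) ^ τ))
          = (2 * p ^ τ * (1 - p)) / (1 - p) ^ τ := by ring
      rw [h7, h8, div_le_div_iff₀ hbτ hqτ] at h6
      linarith
    rw [hqeq, div_le_iff₀ (by positivity), div_mul_eq_mul_div, le_div_iff₀ hb]
    nlinarith [h6']
  rw [div_le_one hr, div_le_iff₀ hb] at hmain
  linarith

theorem stmt16 (p : ℝ) (hp : p ∈ Set.Ioo (1/2 : ℝ) 1)
    (ε : ℝ) (hε : ε = Real.log (p / (1 - p)))
    (α β : ℝ) (hα : α ∈ Set.Ioo (0:ℝ) 1) (hβ : β ∈ Set.Ioo (0:ℝ) 1)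
    (h : ∀ τ : ℝ, 1 < τ →
      α ^ τ * (1 - β) ^ (1 - τ) + (1 - α) ^ τ * β ^ (1 - τ) ≤
        p ^ τ * (1 - p) ^ (1 - τ) + (1 - p) ^ τ * p ^ (1 - τ) ∧
      (1 - β) ^ τ * α ^ (1 - τ) + β ^ τ * (1 - α) ^ (1 - τ) ≤
        p ^ τ * (1 - p) ^ (1 - τ) + (1 - p) ^ τ * p ^ (1 - τ)) :
    1 - α ≤ Real.exp ε * β ∧ 1 - β ≤ Real.exp ε * α := by
  obtain ⟨hp1, hp2⟩ := hp
  obtain ⟨hα1, hα2⟩ := hα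
  obtain ⟨hβ1, hβ2⟩ := hβ
  have hexp : Real.exp ε = p / (1 - p) := by
    rw [hε, Real.exp_log (div_pos (by linarith) (by linarith))]
  rw [hexp]
  constructor
  · apply step_bound p (1 - α) β hp1 hp2 (by linarith) hβ1
    intro τ hτ
    have h1 := (h τ hτ).1
    have hb' : (0:ℝ) < 1 - β := by linarith
    have : (0:ℝ) ≤ α ^ τ * (1 - β) ^ (1 - τ) := by positivity
    linarith
  · apply step_bound p (1 - β) α hp1 hp2 (by linarith) hα1
    intro τ hτ
    have h1 := (h τ hτ).2
    have ha' : (0:ℝ) < 1 - α := by linarith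
    have : (0:ℝ) ≤ β ^ τ * (1 - α) ^ (1 - τ) := by positivity
    linarith
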